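/- Rank bound for TRM: a tensor-ring matrix T = TRM(𝒜^{1:D}) of an I×I matrix can equal the identity matrix (which has rank I, full rank) even when each TR-rank R_d = R = 1; hence the TRM format with minimal rank parameters can represent full-matrix-rank matrices, unlike the TR residual format whose represented matrix, when reshaped as the product of the B-chain and C-chain groupings, has matrix rank at most R². -/
import Mathlib


/-- The tensor-ring matrix (TRM). -/
def TRM {D : ℕ} {I J : Fin D → ℕ} {R : ℕ}
    (A : ∀ d, Fin (I d) → Fin (J d) → Matrix (Fin R) (Fin R) ℝ) :
    Matrix (∀ d, Fin (I d)) (∀ d, Fin (J d)) ℝ :=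
  Matrix.of fun i j => (((List.finRange D).map fun d => A d (i d) (j d)).prod).trace

/-- The tensor-ring (TR) matrix with cores `ℬᵈ`, `𝒞ᵈ`:
`Δ[⟨i⟩,⟨j⟩] = tr(B(i) C(j))` with `B(i) = ℬ¹[i₁]⋯ℬ^D[i_D]`, `C(j) = 𝒞¹[j₁]⋯𝒞^D[j_D]`. -/
def TR {D : ℕ} {I J : Fin D → ℕ} {R : ℕ}
    (B : ∀ d, Fin (I d) → Matrix (Fin R) (Fin R) ℝ)
    (C : ∀ d, Fin (J d) → Matrix (Fin R) (Fin R) ℝ) :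
    Matrix (∀ d, Fin (I d)) (∀ d, Fin (J d)) ℝ :=
  Matrix.of fun i j =>
    ((((List.finRange D).map fun d => B d (i d)).prod
      * ((List.finRange D).map fun d => C d (j d)).prod)).trace

lemma entry_list_prod_one {α : Type*} (l : List α) (f : α → Matrix (Fin 1) (Fin 1) ℝ) :
    ((l.map f).prod) 0 0 = (l.map fun a => f a 0 0).prod := by
  induction l with
  | nil => simp [Matrix.one_apply]
  | cons a t ih => simp [Matrix.mul_apply, Fin.sum_univ_one, ih]

lemma trace_one_by_one (M : Matrix (Fin 1) (Fin 1) ℝ) : M.trace = M 0 0 := by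
  simp [Matrix.trace, Matrix.diag, Fin.sum_univ_one]

/-- A TRM with minimal TR-ranks `R = 1` can represent the identity matrix, which has full
matrix rank `I`; in contrast, any matrix in the TR residual format of rank `R` has matrix
rank at most `R²`. -/
theorem stmt_16 (D R : ℕ) (hD : 1 ≤ D) (I J : Fin D → ℕ)
    (B : ∀ d, Fin (I d) → Matrix (Fin R) (Fin R) ℝ)
    (C : ∀ d, Fin (J d) → Matrix (Fin R) (Fin R) ℝ) :
    (∃ A : ∀ d, Fin (I d) → Fin (I d) → Matrix (Fin 1) (Fin 1) ℝ,
        TRM A = 1 ∧ (TRM A).rank = Fintype.card (∀ d, Fin (I d)))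
    ∧ (TR B C).rank ≤ R ^ 2 := by
  constructor
  · have h1 : TRM (fun d (i j : Fin (I d)) =>
        (if i = j then 1 else 0 : Matrix (Fin 1) (Fin 1) ℝ)) = 1 := by
      funext i j
      have h : TRM (fun d (i j : Fin (I d)) =>
          (if i = j then 1 else 0 : Matrix (Fin 1) (Fin 1) ℝ)) i j
          = ∏ d : Fin D, (if i d = j d then (1:ℝ) else 0) := by
        simp only [TRM, Matrix.of_apply]
        rw [trace_one_by_one, entry_list_prod_one, ← Fin.prod_univ_def]
        congr 1
        funext d
        split <;> simp [Matrix.one_apply]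
      rw [h]
      by_cases hij : i = j
      · subst hij; simp [Matrix.one_apply]
      · rw [Matrix.one_apply_ne hij]
        obtain ⟨d, hd⟩ := Function.ne_iff.mp hij
        exact Finset.prod_eq_zero (Finset.mem_univ d) (by simp [hd])
    exact ⟨_, h1, by rw [h1, Matrix.rank_one]⟩
  · set U : Matrix (∀ d, Fin (I d)) (Fin R × Fin R) ℝ :=
      Matrix.of fun i p => ((List.finRange D).map fun d => B d (i d)).prod p.1 p.2 with hU
    set V : Matrix (Fin R × Fin R) (∀ d, Fin (J d)) ℝ :=
      Matrix.of fun p j => ((List.finRange D).map fun d => C d (j d)).prod p.2 p.1 with hV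
    have hfact : TR B C = U * V := by
      funext i j
      simp only [TR, Matrix.of_apply, Matrix.mul_apply, Matrix.trace, Matrix.diag, hU, hV,
        Fintype.sum_prod_type, Matrix.of_apply]
    calc (TR B C).rank = (U * V).rank := by rw [hfact]
      _ ≤ U.rank := Matrix.rank_mul_le_left U V
      _ ≤ Fintype.card (Fin R × Fin R) := Matrix.rank_le_card_width U
      _ = R ^ 2 := by simp [sq]
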